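/- Improvement of subsolutions (Theorem 3.1, inequality part): let Ȳ be a subsolution, M̄ ∈ M_D the Doob martingale of βȲ, and r̄ ∈ A_0 an adapted process with r̄_i^⊤ E_i[β_{i+1} Ȳ_{i+1}] − F_i^{#}(r̄_i) = F_i(E_i[β_{i+1} Ȳ_{i+1}]) P-a.s. for every i = 0,...,J-1. Then for any M ∈ M_D and all i = 0,...,J-1, Y_i ≥ E_i[θ_i^{low}(r̄,M)] ≥ F_i(E_i[β_{i+1} Ȳ_{i+1}]) ≥ Ȳ_i P-a.s., where Y is the true solution. -/

import Mathlib

open MeasureTheory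
open scoped ENNReal

noncomputable section

variable {Ω : Type*} {m0 : MeasurableSpace Ω}

/-- `L^{∞-}`: membership in `L^p` for every finite `p ≥ 1`. -/
def MemLinfMinus {E : Type*} [NormedAddCommGroup E] (μ : Measure Ω) (f : Ω → E) : Prop :=
  ∀ p : ℝ≥0∞, 1 ≤ p → p ≠ ⊤ → MemLp f p μ

/-- Euclidean dot product on `Fin D → ℝ`. -/
def dotp {D : ℕ} (x y : Fin D → ℝ) : ℝ := ∑ d, x d * y d

/-- Componentwise conditional expectation of an `ℝ^D`-valued random vector. -/
def cexpV (μ : Measure Ω) (m : MeasurableSpace Ω) {D : ℕ} (f : Ω → Fin D → ℝ) :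
    Ω → Fin D → ℝ :=
  fun ω d => (μ[fun ω' => f ω' d|m]) ω

/-- The `ℝ^D`-valued process `β_j Y_j` (vector weight times scalar process). -/
def bprod {D : ℕ} (β : ℕ → Ω → Fin D → ℝ) (Y : ℕ → Ω → ℝ) (j : ℕ) : Ω → Fin D → ℝ :=
  fun ω d => β j ω d * Y j ω

/-- Convex (Fenchel) conjugate, with values in `EReal`. -/
def econj {D : ℕ} (f : (Fin D → ℝ) → ℝ) (u : Fin D → ℝ) : EReal :=
  ⨆ z : Fin D → ℝ, ((dotp u z - f z : ℝ) : EReal)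

/-- Real-valued version of the convex conjugate (meaningful where the conjugate is finite). -/
def rconj {D : ℕ} (f : (Fin D → ℝ) → ℝ) (u : Fin D → ℝ) : ℝ := (econj f u).toReal

/-- The Doob martingale of an `ℝ^D`-valued process `Z`:
`j ↦ ∑_{i=0}^{j-1} (Z_{i+1} - E_i[Z_{i+1}])`. -/
def doobMart (μ : Measure Ω) (ℱ : Filtration ℕ m0) {D : ℕ} (Z : ℕ → Ω → Fin D → ℝ) :
    ℕ → Ω → Fin D → ℝ :=
  fun j ω d => ∑ i ∈ Finset.range j, (Z (i + 1) ω d - cexpV μ (ℱ i) (Z (i + 1)) ω d)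

/-- Standing assumptions on the data `(F, β, ξ)` of the convex dynamic program:
measurability, adaptedness and convexity of the generator, polynomial growth with an
`L^{∞-}` coefficient, and integrability/adaptedness of the weights and terminal condition. -/
structure Setting (μ : Measure Ω) (ℱ : Filtration ℕ m0) (J D : ℕ)
    (F : ℕ → Ω → (Fin D → ℝ) → ℝ) (β : ℕ → Ω → Fin D → ℝ) (ξ : Ω → ℝ) : Prop where
  F_meas : ∀ j < J, Measurable fun p : Ω × (Fin D → ℝ) => F j p.1 p.2
  F_adapted : ∀ j < J, ∀ z : Fin D → ℝ, StronglyMeasurable[ℱ j] fun ω => F j ω z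
  F_convex : ∀ j < J, ∀ ω, ConvexOn ℝ Set.univ (F j ω)
  F_growth : ∃ q : ℝ, 0 ≤ q ∧ ∃ α : ℕ → Ω → ℝ,
      (∀ j < J, StronglyMeasurable[ℱ j] (α j)) ∧
      (∀ j < J, ∀ᵐ ω ∂μ, 0 ≤ α j ω) ∧ (∀ j < J, MemLinfMinus μ (α j)) ∧
      ∀ j < J, ∀ z : Fin D → ℝ, ∀ᵐ ω ∂μ, |F j ω z| ≤ α j ω * (1 + ‖z‖ ^ q)
  β_adapted : ∀ j ≤ J, StronglyMeasurable[ℱ j] (β j)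
  β_int : ∀ j ≤ J, MemLinfMinus μ (β j)
  ξ_meas : StronglyMeasurable[ℱ J] ξ
  ξ_int : MemLinfMinus μ ξ

/-- `Y` is an adapted `L^{∞-}` solution of the dynamic programming equation
`Y_j = F_j(E_j[β_{j+1} Y_{j+1}])`, `Y_J = ξ`. -/
def IsSolution (μ : Measure Ω) (ℱ : Filtration ℕ m0) (J D : ℕ)
    (F : ℕ → Ω → (Fin D → ℝ) → ℝ) (β : ℕ → Ω → Fin D → ℝ) (ξ : Ω → ℝ)
    (Y : ℕ → Ω → ℝ) : Prop :=
  (∀ j ≤ J, StronglyMeasurable[ℱ j] (Y j) ∧ MemLinfMinus μ (Y j)) ∧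
  (∀ᵐ ω ∂μ, Y J ω = ξ ω) ∧
  (∀ j < J, ∀ᵐ ω ∂μ, Y j ω = F j ω (cexpV μ (ℱ j) (bprod β Y (j + 1)) ω))

/-- Supersolution of the dynamic program. -/
def IsSupersolution (μ : Measure Ω) (ℱ : Filtration ℕ m0) (J D : ℕ)
    (F : ℕ → Ω → (Fin D → ℝ) → ℝ) (β : ℕ → Ω → Fin D → ℝ) (ξ : Ω → ℝ)
    (Y : ℕ → Ω → ℝ) : Prop :=
  (∀ j ≤ J, StronglyMeasurable[ℱ j] (Y j) ∧ MemLinfMinus μ (Y j)) ∧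
  (∀ᵐ ω ∂μ, ξ ω ≤ Y J ω) ∧
  (∀ j < J, ∀ᵐ ω ∂μ, F j ω (cexpV μ (ℱ j) (bprod β Y (j + 1)) ω) ≤ Y j ω)

/-- Subsolution of the dynamic program. -/
def IsSubsolution (μ : Measure Ω) (ℱ : Filtration ℕ m0) (J D : ℕ)
    (F : ℕ → Ω → (Fin D → ℝ) → ℝ) (β : ℕ → Ω → Fin D → ℝ) (ξ : Ω → ℝ)
    (Y : ℕ → Ω → ℝ) : Prop :=
  (∀ j ≤ J, StronglyMeasurable[ℱ j] (Y j) ∧ MemLinfMinus μ (Y j)) ∧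
  (∀ᵐ ω ∂μ, Y J ω ≤ ξ ω) ∧
  (∀ j < J, ∀ᵐ ω ∂μ, Y j ω ≤ F j ω (cexpV μ (ℱ j) (bprod β Y (j + 1)) ω))

/-- The monotonicity assumption: `Y⁽¹⁾ ≥ Y⁽²⁾` a.s. implies
`F_j(β_{j+1} Y⁽¹⁾) ≥ F_j(β_{j+1} Y⁽²⁾)` a.s. -/
def MonoAssumption (μ : Measure Ω) (J D : ℕ)
    (F : ℕ → Ω → (Fin D → ℝ) → ℝ) (β : ℕ → Ω → Fin D → ℝ) : Prop :=
  ∀ j < J, ∀ Y1 Y2 : Ω → ℝ, MemLinfMinus μ Y1 → MemLinfMinus μ Y2 →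
    (∀ᵐ ω ∂μ, Y2 ω ≤ Y1 ω) →
    ∀ᵐ ω ∂μ, F j ω (fun d => β (j + 1) ω d * Y2 ω) ≤ F j ω (fun d => β (j + 1) ω d * Y1 ω)

/-- The class `M_D` of `ℝ^D`-valued `L^{∞-}` martingales. -/
def IsMartD (μ : Measure Ω) (ℱ : Filtration ℕ m0) {D : ℕ}
    (M : ℕ → Ω → Fin D → ℝ) : Prop :=
  Martingale M ℱ μ ∧ ∀ j, MemLinfMinus μ (M j)

/-- Admissible controls on the time indices `{j₀, ..., J-1}` (the class `A_{j₀}`). -/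
def IsAdmissibleFrom (μ : Measure Ω) (ℱ : Filtration ℕ m0) (j₀ J D : ℕ)
    (F : ℕ → Ω → (Fin D → ℝ) → ℝ) (r : ℕ → Ω → Fin D → ℝ) : Prop :=
  ∀ i, j₀ ≤ i → i < J →
    StronglyMeasurable[ℱ i] (r i) ∧ MemLinfMinus μ (r i) ∧
    (∀ᵐ ω ∂μ, econj (F i ω) (r i ω) ≠ ⊤) ∧
    MemLinfMinus μ (fun ω => rconj (F i ω) (r i ω))

/-- The lower pathwise recursion `θ^{low}(r, M)`:
`θ_J = ξ`, `θ_i = r_i^⊤ (β_{i+1} θ_{i+1}) - r_i^⊤ ΔM_{i+1} - F_i^{#}(r_i)`,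
required on the time indices `{j₀, ..., J-1}`. -/
def IsThetaLowFrom (μ : Measure Ω) (j₀ J D : ℕ)
    (F : ℕ → Ω → (Fin D → ℝ) → ℝ) (β : ℕ → Ω → Fin D → ℝ) (ξ : Ω → ℝ)
    (r M : ℕ → Ω → Fin D → ℝ) (θ : ℕ → Ω → ℝ) : Prop :=
  (∀ᵐ ω ∂μ, θ J ω = ξ ω) ∧
  ∀ i, j₀ ≤ i → i < J → ∀ᵐ ω ∂μ,
    θ i ω = dotp (r i ω) (fun d => β (i + 1) ω d * θ (i + 1) ω)
      - dotp (r i ω) (fun d => M (i + 1) ω d - M i ω d) - rconj (F i ω) (r i ω)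

/-- The upper pathwise recursion `θ^{up}(M)`:
`θ_J = ξ`, `θ_j = F_j(β_{j+1} θ_{j+1} - ΔM_{j+1})`. -/
def IsThetaUp (μ : Measure Ω) (J D : ℕ)
    (F : ℕ → Ω → (Fin D → ℝ) → ℝ) (β : ℕ → Ω → Fin D → ℝ) (ξ : Ω → ℝ)
    (M : ℕ → Ω → Fin D → ℝ) (θ : ℕ → Ω → ℝ) : Prop :=
  (∀ᵐ ω ∂μ, θ J ω = ξ ω) ∧
  ∀ j < J, ∀ᵐ ω ∂μ,
    θ j ω = F j ω (fun d => β (j + 1) ω d * θ (j + 1) ω - (M (j + 1) ω d - M j ω d))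

/-- The optimality condition `r_i^⊤ E_i[β_{i+1} Y_{i+1}] - F_i^{#}(r_i) = F_i(E_i[β_{i+1} Y_{i+1}])`
on the time indices `{j₀, ..., J-1}`. -/
def OptimalityCond (μ : Measure Ω) (ℱ : Filtration ℕ m0) (j₀ J D : ℕ)
    (F : ℕ → Ω → (Fin D → ℝ) → ℝ) (β : ℕ → Ω → Fin D → ℝ)
    (Y : ℕ → Ω → ℝ) (r : ℕ → Ω → Fin D → ℝ) : Prop :=
  ∀ i, j₀ ≤ i → i < J → ∀ᵐ ω ∂μ,
    dotp (r i ω) (cexpV μ (ℱ i) (bprod β Y (i + 1)) ω) - rconj (F i ω) (r i ω)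
      = F i ω (cexpV μ (ℱ i) (bprod β Y (i + 1)) ω)

/-!
Backward induction on `i` shows `Ȳ_i ≤ E_i[θ_i] ≤ Y_i`. Conditioning the recursion for `θ_i`
on `ℱ_i`, the martingale increment drops out, the conjugate term is `ℱ_i`-measurable because
the optimality condition expresses it through `E_i[β_{i+1} Ȳ_{i+1}]`, and the tower property
leaves `E_i[r̄_i^⊤β_{i+1} E_{i+1}[θ_{i+1}]] - F_i^#(r̄_i)`. Monotonicity forces
`r̄_i^⊤β_{i+1} ≥ 0` (by Fenchel–Young, `F_i(-n β_{i+1}) ≥ -n r̄_i^⊤β_{i+1} - F_i^#(r̄_i)`, while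
`F_i(-n β_{i+1}) ≤ F_i(0)`), so the induction hypothesis may be inserted into this expression.
With `Ȳ_{i+1}` the optimality condition turns it into `F_i(E_i[β_{i+1} Ȳ_{i+1}])`; with
`Y_{i+1}` Fenchel–Young bounds it by `F_i(E_i[β_{i+1} Y_{i+1}]) = Y_i`.
-/

namespace MemLinfMinus

variable {μ : Measure Ω} {E : Type*} [NormedAddCommGroup E]

lemma integrable {f : Ω → E} (hf : MemLinfMinus μ f) : Integrable f μ :=
  memLp_one_iff_integrable.1 (hf 1 le_rfl ENNReal.one_ne_top)

lemma const [IsFiniteMeasure μ] (c : E) : MemLinfMinus μ fun _ => c :=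
  fun _ _ _ => memLp_const c

lemma congr {f g : Ω → E} (hf : MemLinfMinus μ f) (hfg : f =ᵐ[μ] g) : MemLinfMinus μ g :=
  fun p hp hp' => (hf p hp hp').ae_eq hfg

lemma sub {f g : Ω → E} (hf : MemLinfMinus μ f) (hg : MemLinfMinus μ g) :
    MemLinfMinus μ fun ω => f ω - g ω :=
  fun p hp hp' => (hf p hp hp').sub (hg p hp hp')

lemma condExp [NormedSpace ℝ E] [CompleteSpace E] {m : MeasurableSpace Ω} {f : Ω → E}
    (hf : MemLinfMinus μ f) : MemLinfMinus μ (μ[f|m]) :=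
  fun p hp hp' => (hf p hp hp').condExp hp

lemma mul {f g : Ω → ℝ} (hf : MemLinfMinus μ f) (hg : MemLinfMinus μ g) :
    MemLinfMinus μ fun ω => f ω * g ω := by
  intro p hp hp'
  have : ENNReal.HolderTriple (2 * p) (2 * p) p :=
    ⟨by rw [← two_mul, ENNReal.mul_inv (by simp) (by simp), ← mul_assoc,
      ENNReal.mul_inv_cancel two_ne_zero ENNReal.ofNat_ne_top, one_mul]⟩
  have h2p : 1 ≤ 2 * p := hp.trans (le_mul_of_one_le_left' one_le_two)
  have h2p' : 2 * p ≠ ⊤ := ENNReal.mul_ne_top ENNReal.ofNat_ne_top hp'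
  exact (hg (2 * p) h2p h2p').mul' (hf (2 * p) h2p h2p')

lemma finset_sum {ι : Type*} (s : Finset ι) {f : ι → Ω → ℝ}
    (hf : ∀ j ∈ s, MemLinfMinus μ (f j)) : MemLinfMinus μ fun ω => ∑ j ∈ s, f j ω :=
  fun p hp hp' => memLp_finsetSum s fun j hj => hf j hj p hp hp'

lemma apply {D : ℕ} {f : Ω → Fin D → ℝ} (hf : MemLinfMinus μ f) (d : Fin D) :
    MemLinfMinus μ fun ω => f ω d :=
  fun p hp hp' => memLp_pi_iff.1 (hf p hp hp') d

protected lemma dotp {D : ℕ} {f g : Ω → Fin D → ℝ} (hf : MemLinfMinus μ f)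
    (hg : MemLinfMinus μ g) : MemLinfMinus μ fun ω => dotp (f ω) (g ω) :=
  finset_sum _ fun d _ => (hf.apply d).mul (hg.apply d)

end MemLinfMinus

section Conjugate

variable {D : ℕ}

lemma dotp_mul_right (x y : Fin D → ℝ) (t : ℝ) : dotp x (fun d => y d * t) = dotp x y * t := by
  simp only [dotp, Finset.sum_mul, mul_assoc]

lemma dotp_sub_rconj_le {f : (Fin D → ℝ) → ℝ} {u : Fin D → ℝ} (hf : econj f u ≠ ⊤)
    (z : Fin D → ℝ) : dotp u z - rconj f u ≤ f z := by
  have hz : ((dotp u z - f z : ℝ) : EReal) ≤ econj f u :=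
    le_iSup (fun z => ((dotp u z - f z : ℝ) : EReal)) z
  have := EReal.toReal_le_toReal hz (EReal.coe_ne_bot _) hf
  rw [EReal.toReal_coe] at this
  unfold rconj
  linarith

lemma dotp_nonneg_of_bddAbove_neg_ray {f : (Fin D → ℝ) → ℝ} {u : Fin D → ℝ}
    (hf : econj f u ≠ ⊤) (b : Fin D → ℝ) {C : ℝ} (hC : ∀ n : ℕ, f (fun d => b d * -n) ≤ C) :
    0 ≤ dotp u b := by
  by_contra! hneg
  obtain ⟨n, hn⟩ := exists_nat_gt ((C + rconj f u) / -dotp u b)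
  have hyoung := dotp_sub_rconj_le hf (fun d => b d * -n)
  rw [dotp_mul_right] at hyoung
  rw [div_lt_iff₀ (neg_pos.2 hneg)] at hn
  nlinarith [hC n]

lemma MonoAssumption.ae_dotp_nonneg {μ : Measure Ω} [IsFiniteMeasure μ] {J : ℕ}
    {F : ℕ → Ω → (Fin D → ℝ) → ℝ} {β : ℕ → Ω → Fin D → ℝ} (hmono : MonoAssumption μ J D F β)
    {j : ℕ} (hj : j < J) {u : Ω → Fin D → ℝ} (hu : ∀ᵐ ω ∂μ, econj (F j ω) (u ω) ≠ ⊤) :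
    ∀ᵐ ω ∂μ, 0 ≤ dotp (u ω) (β (j + 1) ω) := by
  have hray : ∀ᵐ ω ∂μ, ∀ n : ℕ,
      F j ω (fun d => β (j + 1) ω d * -n) ≤ F j ω (fun d => β (j + 1) ω d * 0) :=
    ae_all_iff.2 fun n => hmono j hj _ _ (.const 0) (.const _) (.of_forall fun _ => by simp)
  filter_upwards [hray, hu] with ω hω hfin
  exact dotp_nonneg_of_bddAbove_neg_ray hfin _ hω

end Conjugate

section Measurability

variable {m : MeasurableSpace Ω} {D : ℕ}

lemma stronglyMeasurable_apply_of_continuous {X Y : Type*} [TopologicalSpace X]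
    [TopologicalSpace.MetrizableSpace X] [SecondCountableTopology X] [MeasurableSpace X]
    [OpensMeasurableSpace X] [TopologicalSpace Y] [TopologicalSpace.PseudoMetrizableSpace Y]
    {h : Ω → X → Y} (hcont : ∀ ω, Continuous (h ω))
    (hmeas : ∀ x, StronglyMeasurable[m] fun ω => h ω x) {g : Ω → X} (hg : Measurable[m] g) :
    StronglyMeasurable[m] fun ω => h ω (g ω) :=
  (stronglyMeasurable_uncurry_of_continuous_of_stronglyMeasurable (u := fun x ω => h ω x)
    hcont hmeas).comp_measurable (hg.prodMk measurable_id)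

protected lemma MeasureTheory.StronglyMeasurable.dotp {u v : Ω → Fin D → ℝ}
    (hu : StronglyMeasurable[m] u) (hv : StronglyMeasurable[m] v) :
    StronglyMeasurable[m] fun ω => dotp (u ω) (v ω) :=
  (show Continuous fun p : (Fin D → ℝ) × (Fin D → ℝ) => dotp p.1 p.2 by
    unfold dotp; fun_prop).comp_stronglyMeasurable (hu.prodMk hv)

end Measurability

lemma Setting.aestronglyMeasurable_rconj {μ : Measure Ω} {ℱ : Filtration ℕ m0} {J D : ℕ}
    {F : ℕ → Ω → (Fin D → ℝ) → ℝ} {β : ℕ → Ω → Fin D → ℝ} {ξ : Ω → ℝ}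
    (hset : Setting μ ℱ J D F β ξ) {i : ℕ} (hi : i < J) {u z : Ω → Fin D → ℝ}
    (hu : StronglyMeasurable[ℱ i] u) (hz : Measurable[ℱ i] z)
    (hopt : ∀ᵐ ω ∂μ, dotp (u ω) (z ω) - rconj (F i ω) (u ω) = F i ω (z ω)) :
    AEStronglyMeasurable[ℱ i] (fun ω => rconj (F i ω) (u ω)) μ := by
  have hFz : StronglyMeasurable[ℱ i] fun ω => F i ω (z ω) :=
    stronglyMeasurable_apply_of_continuous
      (fun ω => continuousOn_univ.1 ((hset.F_convex i hi ω).continuousOn isOpen_univ))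
      (hset.F_adapted i hi) hz
  exact ⟨_, (hu.dotp hz.stronglyMeasurable).sub hFz, by
    filter_upwards [hopt] with ω h
    simp only [Pi.sub_apply]
    linarith⟩

section ConditionalExpectation

variable {μ : Measure Ω} {m : MeasurableSpace Ω} {D : ℕ}

lemma measurable_cexpV (f : Ω → Fin D → ℝ) : Measurable[m] (cexpV μ m f) :=
  measurable_pi_lambda _ fun _ => stronglyMeasurable_condExp.measurable

lemma cexpV_ae_eq_condExp {f : Ω → Fin D → ℝ} (hf : Integrable f μ) :
    cexpV μ m f =ᵐ[μ] μ[f|m] := by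
  have hcomp : ∀ d, ∀ᵐ ω ∂μ, cexpV μ m f ω d = (μ[f|m]) ω d := fun d =>
    ((ContinuousLinearMap.proj (R := ℝ) (φ := fun _ : Fin D => ℝ) d).comp_condExp_comm hf).symm
  filter_upwards [ae_all_iff.2 hcomp] with ω hω
  exact funext hω

lemma MeasureTheory.Martingale.cexpV_sub_ae_eq_zero {ℱ : Filtration ℕ m0}
    [SigmaFiniteFiltration μ ℱ] {M : ℕ → Ω → Fin D → ℝ} (hM : Martingale M ℱ μ) (i : ℕ) :
    cexpV μ (ℱ i) (fun ω d => M (i + 1) ω d - M i ω d) =ᵐ[μ] 0 := by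
  have hsub := condExp_sub (hM.integrable (i + 1)) (hM.integrable i) (ℱ i)
  rw [condExp_of_stronglyMeasurable (ℱ.le i) (hM.stronglyMeasurable i) (hM.integrable i)] at hsub
  filter_upwards [cexpV_ae_eq_condExp (m := ℱ i) ((hM.integrable (i + 1)).sub (hM.integrable i)),
    hsub, hM.condExp_ae_eq (Nat.le_add_right i 1)] with ω h₁ h₂ h₃
  change cexpV μ (ℱ i) (M (i + 1) - M i) ω = 0
  rw [h₁, h₂, Pi.sub_apply, h₃, sub_self]

lemma condExp_dotp_of_stronglyMeasurable_left {u v : Ω → Fin D → ℝ}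
    (hu : StronglyMeasurable[m] u) (hv : ∀ d, Integrable (fun ω => v ω d) μ)
    (huv : ∀ d, Integrable (fun ω => u ω d * v ω d) μ) :
    μ[fun ω => dotp (u ω) (v ω)|m] =ᵐ[μ] fun ω => dotp (u ω) (cexpV μ m v ω) := by
  have hsum : (fun ω => dotp (u ω) (v ω)) = ∑ d, fun ω => u ω d * v ω d := by
    ext ω; simp [dotp]
  have hpull : ∀ d, μ[fun ω => u ω d * v ω d|m] =ᵐ[μ] fun ω => u ω d * cexpV μ m v ω d :=
    fun d => condExp_mul_of_stronglyMeasurable_left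
      ((continuous_apply d).comp_stronglyMeasurable hu) (huv d) (hv d)
  rw [hsum]
  filter_upwards [condExp_finsetSum (s := Finset.univ) (fun d _ => huv d) m,
    ae_all_iff.2 hpull] with ω h₁ h₂
  simp only [h₁, Finset.sum_apply, h₂, dotp]

lemma condExp_dotp_mul_ae_eq {u b : Ω → Fin D → ℝ} {X : Ω → ℝ}
    (hu : StronglyMeasurable[m] u) (huL : MemLinfMinus μ u) (hbL : MemLinfMinus μ b)
    (hXL : MemLinfMinus μ X) :
    μ[(fun ω => dotp (u ω) (b ω)) * X|m] =ᵐ[μ]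
      fun ω => dotp (u ω) (cexpV μ m (fun ω d => b ω d * X ω) ω) := by
  have hrw : (fun ω => dotp (u ω) (b ω)) * X = fun ω => dotp (u ω) (fun d => b ω d * X ω) := by
    ext ω; exact (dotp_mul_right _ _ _).symm
  rw [hrw]
  exact condExp_dotp_of_stronglyMeasurable_left hu (fun d => ((hbL.apply d).mul hXL).integrable)
    fun d => ((huL.apply d).mul ((hbL.apply d).mul hXL)).integrable

lemma IsMartD.condExp_dotp_sub_ae_eq_zero {ℱ : Filtration ℕ m0} [SigmaFiniteFiltration μ ℱ]
    {M : ℕ → Ω → Fin D → ℝ} (hM : IsMartD μ ℱ M) {i : ℕ} {u : Ω → Fin D → ℝ}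
    (hu : StronglyMeasurable[ℱ i] u) (huL : MemLinfMinus μ u) :
    μ[fun ω => dotp (u ω) (fun d => M (i + 1) ω d - M i ω d)|ℱ i] =ᵐ[μ] 0 := by
  have hΔ : MemLinfMinus μ fun ω d => M (i + 1) ω d - M i ω d := (hM.2 (i + 1)).sub (hM.2 i)
  filter_upwards [condExp_dotp_of_stronglyMeasurable_left hu (fun d => (hΔ.apply d).integrable)
    (fun d => ((huL.apply d).mul (hΔ.apply d)).integrable),
    Martingale.cexpV_sub_ae_eq_zero hM.1 i] with ω h₁ h₂
  rw [h₁, h₂]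
  simp [dotp]

lemma condExp_mul_condExp_of_stronglyMeasurable_left {m' : MeasurableSpace Ω} (hmm' : m ≤ m')
    (hm' : m' ≤ m0) [SigmaFinite (μ.trim hm')] {a f : Ω → ℝ} (ha : StronglyMeasurable[m'] a)
    (haf : Integrable (a * f) μ) (hf : Integrable f μ) :
    μ[a * f|m] =ᵐ[μ] μ[a * μ[f|m']|m] :=
  (condExp_condExp_of_le hmm' hm').symm.trans
    (condExp_congr_ae (condExp_mul_of_stronglyMeasurable_left ha haf hf))

lemma condExp_mul_mono_of_nonneg {a f g : Ω → ℝ} (ha : 0 ≤ᵐ[μ] a)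
    (haf : Integrable (a * f) μ) (hag : Integrable (a * g) μ) (hfg : f ≤ᵐ[μ] g) :
    μ[a * f|m] ≤ᵐ[μ] μ[a * g|m] :=
  condExp_mono haf hag <| by
    filter_upwards [ha, hfg] with ω ha hfg
    exact mul_le_mul_of_nonneg_left hfg ha

end ConditionalExpectation

lemma condExp_ae_eq_of_thetaLow_step {μ : Measure Ω} {ℱ : Filtration ℕ m0}
    [SigmaFiniteFiltration μ ℱ] {D : ℕ} {M : ℕ → Ω → Fin D → ℝ} (hM : IsMartD μ ℱ M) {i : ℕ}
    {u b : Ω → Fin D → ℝ} {c θ θ' : Ω → ℝ} (hu : StronglyMeasurable[ℱ i] u)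
    (huL : MemLinfMinus μ u) (hb : StronglyMeasurable[ℱ (i + 1)] b) (hbL : MemLinfMinus μ b)
    (hθ'L : MemLinfMinus μ θ') (hc : AEStronglyMeasurable[ℱ i] c μ) (hcL : MemLinfMinus μ c)
    (hθ : ∀ᵐ ω ∂μ, θ ω = dotp (u ω) (fun d => b ω d * θ' ω)
      - dotp (u ω) (fun d => M (i + 1) ω d - M i ω d) - c ω) :
    μ[θ|ℱ i] =ᵐ[μ] μ[(fun ω => dotp (u ω) (b ω)) * μ[θ'|ℱ (i + 1)]|ℱ i] - c := by
  set a := fun ω => dotp (u ω) (b ω)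
  set N := fun ω => dotp (u ω) (fun d => M (i + 1) ω d - M i ω d)
  have haθ' : Integrable (a * θ') μ := ((huL.dotp hbL).mul hθ'L).integrable
  have hN : Integrable N μ := (huL.dotp ((hM.2 (i + 1)).sub (hM.2 i))).integrable
  have hθeq : θ =ᵐ[μ] a * θ' - N - c := by
    filter_upwards [hθ] with ω h
    simp only [h, Pi.sub_apply, Pi.mul_apply, a, N, dotp_mul_right]
  filter_upwards [condExp_congr_ae (m := ℱ i) hθeq, condExp_sub (haθ'.sub hN) hcL.integrable (ℱ i),
    condExp_sub haθ' hN (ℱ i), hM.condExp_dotp_sub_ae_eq_zero hu huL,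
    condExp_of_aestronglyMeasurable' (ℱ.le i) hc hcL.integrable,
    condExp_mul_condExp_of_stronglyMeasurable_left (ℱ.mono (Nat.le_add_right i 1)) (ℱ.le (i + 1))
      ((hu.mono (ℱ.mono (Nat.le_add_right i 1))).dotp hb) haθ' hθ'L.integrable]
    with ω h₁ h₂ h₃ h₄ h₅ h₆
  rw [h₁, h₂, Pi.sub_apply, h₃, Pi.sub_apply, h₅, show μ[N|ℱ i] ω = 0 from h₄,
    show μ[a * θ'|ℱ i] ω = _ from h₆, sub_zero]
  rfl

section Improvement

variable {μ : Measure Ω} [IsFiniteMeasure μ] {ℱ : Filtration ℕ m0} {J D : ℕ}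
  {F : ℕ → Ω → (Fin D → ℝ) → ℝ} {β : ℕ → Ω → Fin D → ℝ} {ξ : Ω → ℝ}
  {Y Ybar θ : ℕ → Ω → ℝ} {r M : ℕ → Ω → Fin D → ℝ}

lemma IsThetaLowFrom.condExp_bounds_step (hθ : IsThetaLowFrom μ 0 J D F β ξ r M θ)
    (hset : Setting μ ℱ J D F β ξ) (hmono : MonoAssumption μ J D F β)
    (hY : IsSolution μ ℱ J D F β ξ Y) (hYbar : IsSubsolution μ ℱ J D F β ξ Ybar)
    (hr : IsAdmissibleFrom μ ℱ 0 J D F r) (hropt : OptimalityCond μ ℱ 0 J D F β Ybar r)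
    (hM : IsMartD μ ℱ M) {i : ℕ} (hi : i < J)
    (hθL : MemLinfMinus μ (θ (i + 1))) (hlow : Ybar (i + 1) ≤ᵐ[μ] μ[θ (i + 1)|ℱ (i + 1)])
    (hup : μ[θ (i + 1)|ℱ (i + 1)] ≤ᵐ[μ] Y (i + 1)) :
    MemLinfMinus μ (θ i) ∧
      (fun ω => F i ω (cexpV μ (ℱ i) (bprod β Ybar (i + 1)) ω)) ≤ᵐ[μ] μ[θ i|ℱ i] ∧
      μ[θ i|ℱ i] ≤ᵐ[μ] Y i := by
  obtain ⟨hr_meas, hrL, hr_fin, hcL⟩ := hr i i.zero_le hi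
  have hβL := hset.β_int (i + 1) hi
  have hYbarL := (hYbar.1 (i + 1) hi).2
  have hYL := (hY.1 (i + 1) hi).2
  have hopt := hropt i i.zero_le hi
  have hθi := hθ.2 i i.zero_le hi
  set a := fun ω => dotp (r i ω) (β (i + 1) ω)
  have haL : MemLinfMinus μ a := hrL.dotp hβL
  have hEθL : MemLinfMinus μ (μ[θ (i + 1)|ℱ (i + 1)]) := hθL.condExp
  have hsplit := condExp_ae_eq_of_thetaLow_step hM hr_meas hrL (hset.β_adapted (i + 1) hi) hβL
    hθL (hset.aestronglyMeasurable_rconj hi hr_meas (measurable_cexpV _) hopt) hcL hθi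
  have hpos := hmono.ae_dotp_nonneg hi hr_fin
  refine ⟨?_, ?_, ?_⟩
  · refine (((haL.mul hθL).sub (hrL.dotp ((hM.2 (i + 1)).sub (hM.2 i)))).sub hcL).congr ?_
    filter_upwards [hθi] with ω h
    rw [h, dotp_mul_right]
    rfl
  · filter_upwards [hsplit, hopt, condExp_dotp_mul_ae_eq hr_meas hrL hβL hYbarL,
      condExp_mul_mono_of_nonneg hpos (haL.mul hYbarL).integrable (haL.mul hEθL).integrable hlow]
      with ω h₁ h₂ h₃ h₄
    simp only [h₁, Pi.sub_apply, ← h₂]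
    exact sub_le_sub_right (h₃ ▸ h₄) _
  · filter_upwards [hsplit, hY.2.2 i hi, hr_fin, condExp_dotp_mul_ae_eq hr_meas hrL hβL hYL,
      condExp_mul_mono_of_nonneg hpos (haL.mul hEθL).integrable (haL.mul hYL).integrable hup]
      with ω h₁ h₂ h₃ h₄ h₅
    rw [h₁, Pi.sub_apply, h₂]
    exact (sub_le_sub_right (h₄ ▸ h₅) _).trans (dotp_sub_rconj_le h₃ _)

lemma IsThetaLowFrom.condExp_bounds (hθ : IsThetaLowFrom μ 0 J D F β ξ r M θ)
    (hset : Setting μ ℱ J D F β ξ) (hmono : MonoAssumption μ J D F β)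
    (hY : IsSolution μ ℱ J D F β ξ Y) (hYbar : IsSubsolution μ ℱ J D F β ξ Ybar)
    (hr : IsAdmissibleFrom μ ℱ 0 J D F r) (hropt : OptimalityCond μ ℱ 0 J D F β Ybar r)
    (hM : IsMartD μ ℱ M) {i : ℕ} (hi : i ≤ J) :
    MemLinfMinus μ (θ i) ∧ Ybar i ≤ᵐ[μ] μ[θ i|ℱ i] ∧ μ[θ i|ℱ i] ≤ᵐ[μ] Y i := by
  induction hi using Nat.decreasingInduction with
  | self =>
    have hθJ : θ J =ᵐ[μ] ξ := hθ.1
    have hYbarJ : Ybar J ≤ᵐ[μ] ξ := hYbar.2.1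
    have hYJ : Y J =ᵐ[μ] ξ := hY.2.1
    have hE : μ[θ J|ℱ J] =ᵐ[μ] ξ := (condExp_congr_ae hθJ).trans <| by
      rw [condExp_of_stronglyMeasurable (ℱ.le J) hset.ξ_meas hset.ξ_int.integrable]
    exact ⟨hset.ξ_int.congr hθJ.symm, hYbarJ.trans hE.symm.le, hE.le.trans hYJ.symm.le⟩
  | of_succ k hk ih =>
    obtain ⟨hθL, hF, hEY⟩ :=
      hθ.condExp_bounds_step hset hmono hY hYbar hr hropt hM hk ih.1 ih.2.1 ih.2.2
    exact ⟨hθL, Filter.EventuallyLE.trans (hYbar.2.2 k hk) hF, hEY⟩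

end Improvement

/-- Improvement of subsolutions, inequality part: let `Ȳ` be a subsolution and
`r̄ ∈ A_0` a control satisfying
`r̄_i^⊤ E_i[β_{i+1} Ȳ_{i+1}] − F_i^{#}(r̄_i) = F_i(E_i[β_{i+1} Ȳ_{i+1}])` a.s. Then for any
`M ∈ M_D` and all `i = 0,…,J-1`,
`Y_i ≥ E_i[θ_i^{low}(r̄,M)] ≥ F_i(E_i[β_{i+1} Ȳ_{i+1}]) ≥ Ȳ_i` `P`-a.s. -/
theorem subsolution_improvement_inequalities
    (μ : Measure Ω) [IsProbabilityMeasure μ] (ℱ : Filtration ℕ m0)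
    (J D : ℕ) (F : ℕ → Ω → (Fin D → ℝ) → ℝ) (β : ℕ → Ω → Fin D → ℝ) (ξ : Ω → ℝ)
    (hset : Setting μ ℱ J D F β ξ) (hmono : MonoAssumption μ J D F β)
    (Y : ℕ → Ω → ℝ) (hY : IsSolution μ ℱ J D F β ξ Y)
    (Ybar : ℕ → Ω → ℝ) (hYbar : IsSubsolution μ ℱ J D F β ξ Ybar)
    (r : ℕ → Ω → Fin D → ℝ)
    (hr : IsAdmissibleFrom μ ℱ 0 J D F r)
    (hropt : OptimalityCond μ ℱ 0 J D F β Ybar r)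
    (M : ℕ → Ω → Fin D → ℝ) (hM : IsMartD μ ℱ M)
    (θ : ℕ → Ω → ℝ) (hθ : IsThetaLowFrom μ 0 J D F β ξ r M θ) :
    ∀ i < J, ∀ᵐ ω ∂μ,
      Ybar i ω ≤ F i ω (cexpV μ (ℱ i) (bprod β Ybar (i + 1)) ω) ∧
      F i ω (cexpV μ (ℱ i) (bprod β Ybar (i + 1)) ω) ≤ (μ[θ i|ℱ i]) ω ∧
      (μ[θ i|ℱ i]) ω ≤ Y i ω := by
  intro i hi
  obtain ⟨hθL, hlow, hup⟩ :=
    hθ.condExp_bounds hset hmono hY hYbar hr hropt hM (show i + 1 ≤ J from hi)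
  obtain ⟨-, hF, hEY⟩ := hθ.condExp_bounds_step hset hmono hY hYbar hr hropt hM hi hθL hlow hup
  filter_upwards [hYbar.2.2 i hi, hF, hEY] with ω h₁ h₂ h₃
  exact ⟨h₁, h₂, h₃⟩

end
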